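/- Let the common law P of (X, Rᴬ, Sᴬ, Rᴮ, Sᴮ) be such that each triple (X, Rᴬ, Sᴬ) and (X, Rᴮ, Sᴮ) satisfies the MAR condition and the ε-positivity condition, and let π̂ᴬ, μ̂ᴬ, π̂ᴮ, μ̂ᴮ : 𝒳 → ℝ be measurable nuisance estimates with 1 − π̂ᴬ(X) ≥ ε and 1 − π̂ᴮ(X) ≥ ε almost surely, all relevant differences lying in L²(P). Then | E[ ((1−Rᴬ)/(1−π̂ᴬ(X)))·(Sᴬ − μ̂ᴬ(X)) + μ̂ᴬ(X) − ((1−Rᴮ)/(1−π̂ᴮ(X)))·(Sᴮ − μ̂ᴮ(X)) − μ̂ᴮ(X) ] − Δᴬᴮ | ≤ (1/ε)·( ‖π̂ᴬ(X) − πᴬ(X)‖_{L²(P)}·‖μ̂ᴬ(X) − μ0ᴬ(X)‖_{L²(P)} + ‖π̂ᴮ(X) − πᴮ(X)‖_{L²(P)}·‖μ̂ᴮ(X) − μ0ᴮ(X)‖_{L²(P)} ), where Δᴬᴮ := E[Sᴬ − Sᴮ]. -/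

import Mathlib

open MeasureTheory ProbabilityTheory

/-!
For one classifier, conditioning on `m = σ(X)` turns the inverse-weighted residual
`(1 - R)(S - μ̂)/(1 - π̂)` into `(1 - π)(μ₀ - μ̂)/(1 - π̂)`, since `π̂` and `μ̂` are
`m`-measurable, while MAR and positivity give `E[S | m] = μ₀`. So the bias of the doubly robust
score is `E[(π̂ - π)(μ₀ - μ̂)/(1 - π̂)]`, a product of the two nuisance errors, which
Cauchy–Schwarz and `1 - π̂ ≥ ε` bound by `‖π̂ - π‖₂ ‖μ̂ - μ₀‖₂ / ε`. The bias for the difference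
of two classifiers is the difference of their biases.
-/

theorem integral_abs_mul_le_eLpNorm_two_mul {α : Type*} [MeasurableSpace α] {μ : Measure α}
    {f g : α → ℝ} (hf : MemLp f 2 μ) (hg : MemLp g 2 μ) :
    ∫ a, |f a * g a| ∂μ ≤ (eLpNorm f 2 μ).toReal * (eLpNorm g 2 μ).toReal := by
  have holder : eLpNorm (fun a => f a * g a) 1 μ ≤ eLpNorm f 2 μ * eLpNorm g 2 μ := by
    simpa using eLpNorm_le_eLpNorm_mul_eLpNorm'_of_norm (p := 2) (q := 2) (r := 1) hf.1 hg.1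
      (· * ·) 1 (.of_forall fun a => by simp [norm_mul])
  have hfg : Integrable (fun a => f a * g a) μ := hf.integrable_mul hg
  rw [← ENNReal.toReal_mul]
  calc ∫ a, |f a * g a| ∂μ = (eLpNorm (fun a => f a * g a) 1 μ).toReal := by
        rw [eLpNorm_one_eq_lintegral_enorm, ← ofReal_integral_norm_eq_lintegral_enorm hfg,
          ENNReal.toReal_ofReal (integral_nonneg fun _ => norm_nonneg _)]
        rfl
    _ ≤ _ := ENNReal.toReal_mono (ENNReal.mul_ne_top hf.eLpNorm_ne_top hg.eLpNorm_ne_top) holder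

section ConditionalExpectation

variable {Ω : Type*} {m mΩ : MeasurableSpace Ω} {μ : Measure Ω} [IsFiniteMeasure μ]

theorem integral_mul_condExp_of_bound (hm : m ≤ mΩ) {w f : Ω → ℝ} (hw : StronglyMeasurable[m] w)
    (c : ℝ) (hw_bound : ∀ᵐ ω ∂μ, ‖w ω‖ ≤ c) (hf : Integrable f μ) :
    ∫ ω, w ω * μ[f|m] ω ∂μ = ∫ ω, w ω * f ω ∂μ := by
  rw [← integral_condExp hm (f := fun ω => w ω * f ω)]
  exact integral_congr_ae (condExp_stronglyMeasurable_mul_of_bound hm hw hf c hw_bound).symm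

theorem condExp_one_sub (hm : m ≤ mΩ) {R : Ω → ℝ} (hR : Integrable R μ) :
    μ[fun ω => 1 - R ω|m] =ᵐ[μ] fun ω => 1 - μ[R|m] ω := by
  filter_upwards [condExp_sub (integrable_const 1) hR m] with ω hω
  rw [show (fun ω => 1 - R ω) = (fun _ => (1 : ℝ)) - R from rfl, hω, Pi.sub_apply,
    condExp_const hm]

end ConditionalExpectation

def MissingAtRandom {Ω : Type*} {mΩ : MeasurableSpace Ω} (P : Measure Ω)
    (m : MeasurableSpace Ω) (R S : Ω → ℝ) : Prop :=
  P[fun ω => (1 - R ω) * S ω|m] =ᵐ[P] fun ω => P[fun ω' => 1 - R ω'|m] ω * P[S|m] ω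

/-- The paper's `μ0`; where `P[R|m] = 1` the division gives the junk value `0`. -/
noncomputable def outcomeRegression {Ω : Type*} {mΩ : MeasurableSpace Ω} (P : Measure Ω)
    (m : MeasurableSpace Ω) (R S : Ω → ℝ) : Ω → ℝ :=
  fun ω => P[fun ω' => (1 - R ω') * S ω'|m] ω / (1 - P[R|m] ω)

/-- The doubly robust score, with `ph` and `mh` the nuisance estimates `π̂` and `μ̂`. -/
noncomputable def drScore {Ω : Type*} (R S ph mh : Ω → ℝ) : Ω → ℝ :=
  fun ω => (1 - R ω) / (1 - ph ω) * (S ω - mh ω) + mh ω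

section DoublyRobust

variable {Ω : Type*} {m mΩ : MeasurableSpace Ω} {P : Measure Ω}
  {R S ph mh : Ω → ℝ} {ε : ℝ}

theorem integrable_one_sub_mul (hR : AEMeasurable R P) (hR01 : ∀ᵐ ω ∂P, R ω ∈ Set.Icc 0 1)
    {f : Ω → ℝ} (hf : Integrable f P) : Integrable (fun ω => (1 - R ω) * f ω) P :=
  hf.bdd_mul (c := 1) (aemeasurable_const.sub hR).aestronglyMeasurable <| by
    filter_upwards [hR01] with ω hω
    rw [Real.norm_eq_abs, abs_le]
    constructor <;> linarith [hω.1, hω.2]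

theorem ae_norm_inv_one_sub_le (hε : 0 < ε) (hph : ∀ᵐ ω ∂P, ε ≤ 1 - ph ω) :
    ∀ᵐ ω ∂P, ‖(1 - ph ω)⁻¹‖ ≤ ε⁻¹ := by
  filter_upwards [hph] with ω hω
  rw [norm_inv, Real.norm_of_nonneg (hε.le.trans hω)]
  exact inv_anti₀ hε hω

theorem one_sub_mul_outcomeRegression_ae_eq (hpos : ∀ᵐ ω ∂P, P[R|m] ω ≠ 1) :
    (fun ω => (1 - P[R|m] ω) * outcomeRegression P m R S ω)
      =ᵐ[P] P[fun ω => (1 - R ω) * S ω|m] := by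
  filter_upwards [hpos] with ω hω
  exact mul_div_cancel₀ _ (sub_ne_zero.2 hω.symm)

theorem condExp_ae_eq_outcomeRegression [IsFiniteMeasure P] (hm : m ≤ mΩ) (hR : Integrable R P)
    (hMAR : MissingAtRandom P m R S) (hpos : ∀ᵐ ω ∂P, P[R|m] ω ≠ 1) :
    P[S|m] =ᵐ[P] outcomeRegression P m R S := by
  filter_upwards [hMAR, condExp_one_sub hm hR, one_sub_mul_outcomeRegression_ae_eq hpos, hpos]
    with ω hMARω hRω hμω hposω
  refine mul_left_cancel₀ (sub_ne_zero.2 (Ne.symm hposω)) ?_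
  rw [hμω, hMARω, hRω]

theorem integrable_outcomeRegression [IsFiniteMeasure P] (hm : m ≤ mΩ) (hR : Integrable R P)
    (hMAR : MissingAtRandom P m R S) (hpos : ∀ᵐ ω ∂P, P[R|m] ω ≠ 1) :
    Integrable (outcomeRegression P m R S) P :=
  integrable_condExp.congr (condExp_ae_eq_outcomeRegression hm hR hMAR hpos)

theorem integrable_of_memLp_sub_outcomeRegression [IsFiniteMeasure P] (hm : m ≤ mΩ)
    (hR : Integrable R P) (hMAR : MissingAtRandom P m R S)
    (hpos : ∀ᵐ ω ∂P, P[R|m] ω ≠ 1) {p : ENNReal} (hp : 1 ≤ p)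
    (hmh : MemLp (fun ω => mh ω - outcomeRegression P m R S ω) p P) :
    Integrable mh P := by
  refine ((hmh.integrable hp).add (integrable_outcomeRegression hm hR hMAR hpos)).congr
    (ae_of_all _ fun ω => ?_)
  simp

theorem condExp_one_sub_mul_sub_ae_eq [IsFiniteMeasure P] (hm : m ≤ mΩ) (hR : AEMeasurable R P)
    (hR01 : ∀ᵐ ω ∂P, R ω ∈ Set.Icc 0 1) (hS : Integrable S P)
    (hpos : ∀ᵐ ω ∂P, P[R|m] ω ≠ 1) (hmh : StronglyMeasurable[m] mh) (hmh_int : Integrable mh P) :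
    P[fun ω => (1 - R ω) * (S ω - mh ω)|m]
      =ᵐ[P] fun ω => (1 - P[R|m] ω) * (outcomeRegression P m R S ω - mh ω) := by
  have hRS := integrable_one_sub_mul hR hR01 hS
  have hRmh : Integrable ((fun ω => 1 - R ω) * mh) P := integrable_one_sub_mul hR hR01 hmh_int
  have hsplit : (fun ω => (1 - R ω) * (S ω - mh ω))
      = (fun ω => (1 - R ω) * S ω) - (fun ω => 1 - R ω) * mh := by
    ext ω; simp only [Pi.sub_apply, Pi.mul_apply]; ring
  have hpull : P[(fun ω => 1 - R ω) * mh|m] =ᵐ[P] P[fun ω => 1 - R ω|m] * mh :=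
    condExp_mul_of_stronglyMeasurable_right hmh hRmh
      ((integrable_const 1).sub (Integrable.of_mem_Icc 0 1 hR hR01))
  rw [hsplit]
  filter_upwards [condExp_sub hRS hRmh m, hpull,
    condExp_one_sub hm (Integrable.of_mem_Icc 0 1 hR hR01),
    one_sub_mul_outcomeRegression_ae_eq (S := S) hpos] with ω hsub hpullω hRω hμω
  rw [hsub, Pi.sub_apply, hpullω, Pi.mul_apply, hRω, ← hμω]
  ring

theorem integrable_inv_one_sub_mul [IsFiniteMeasure P] (hph : AEMeasurable ph P) (hε : 0 < ε)
    (hph_pos : ∀ᵐ ω ∂P, ε ≤ 1 - ph ω) {f : Ω → ℝ} (hf : Integrable f P) :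
    Integrable (fun ω => (1 - ph ω)⁻¹ * f ω) P :=
  hf.bdd_mul (aemeasurable_const.sub hph).inv.aestronglyMeasurable
    (ae_norm_inv_one_sub_le hε hph_pos)

theorem integrable_drScore [IsFiniteMeasure P] (hR : AEMeasurable R P)
    (hR01 : ∀ᵐ ω ∂P, R ω ∈ Set.Icc 0 1) (hS : Integrable S P) (hph : AEMeasurable ph P)
    (hmh : Integrable mh P) (hε : 0 < ε) (hph_pos : ∀ᵐ ω ∂P, ε ≤ 1 - ph ω) :
    Integrable (drScore R S ph mh) P := by
  refine ((integrable_inv_one_sub_mul hph hε hph_pos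
    (integrable_one_sub_mul hR hR01 (hS.sub hmh))).add hmh).congr (ae_of_all _ fun ω => ?_)
  simp only [drScore, Pi.add_apply, Pi.sub_apply]
  ring

theorem integral_drScore_sub_integral [IsFiniteMeasure P] (hm : m ≤ mΩ) (hR : AEMeasurable R P)
    (hR01 : ∀ᵐ ω ∂P, R ω ∈ Set.Icc 0 1) (hS : Integrable S P) (hMAR : MissingAtRandom P m R S)
    (hpos : ∀ᵐ ω ∂P, P[R|m] ω ≠ 1) (hph : StronglyMeasurable[m] ph)
    (hmh : StronglyMeasurable[m] mh) (hmh_int : Integrable mh P) (hε : 0 < ε)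
    (hph_pos : ∀ᵐ ω ∂P, ε ≤ 1 - ph ω) :
    ∫ ω, drScore R S ph mh ω ∂P - ∫ ω, S ω ∂P
      = ∫ ω, (ph ω - P[R|m] ω) * (outcomeRegression P m R S ω - mh ω) / (1 - ph ω) ∂P := by
  set μ₀ := outcomeRegression P m R S
  have hRint := Integrable.of_mem_Icc 0 1 hR hR01
  have hph_ae : AEMeasurable ph P := (hph.mono hm).measurable.aemeasurable
  have hw : StronglyMeasurable[m] fun ω => (1 - ph ω)⁻¹ :=
    (measurable_const.sub hph.measurable).inv.stronglyMeasurable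
  have hresid : Integrable (fun ω => (1 - R ω) * (S ω - mh ω)) P :=
    integrable_one_sub_mul hR hR01 (hS.sub hmh_int)
  have hCE := condExp_one_sub_mul_sub_ae_eq hm hR hR01 hS hpos hmh hmh_int
  have hCE_weighted : (fun ω => (1 - ph ω)⁻¹ * P[fun ω => (1 - R ω) * (S ω - mh ω)|m] ω)
      =ᵐ[P] fun ω => (1 - ph ω)⁻¹ * ((1 - P[R|m] ω) * (μ₀ ω - mh ω)) := by
    filter_upwards [hCE] with ω hω
    rw [hω]
  have hweighted_int :=
    (integrable_inv_one_sub_mul hph_ae hε hph_pos integrable_condExp).congr hCE_weighted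
  have hμ₀ : Integrable μ₀ P := integrable_outcomeRegression hm hRint hMAR hpos
  have hweighted : ∫ ω, (1 - ph ω)⁻¹ * ((1 - R ω) * (S ω - mh ω)) ∂P
      = ∫ ω, (1 - ph ω)⁻¹ * ((1 - P[R|m] ω) * (μ₀ ω - mh ω)) ∂P := by
    rw [← integral_mul_condExp_of_bound hm hw _ (ae_norm_inv_one_sub_le hε hph_pos) hresid]
    exact integral_congr_ae hCE_weighted
  have hS_eq : ∫ ω, S ω ∂P = ∫ ω, μ₀ ω ∂P := by
    rw [← integral_condExp hm]
    exact integral_congr_ae (condExp_ae_eq_outcomeRegression hm hRint hMAR hpos)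
  have hdrScore : ∫ ω, drScore R S ph mh ω ∂P
      = ∫ ω, (1 - ph ω)⁻¹ * ((1 - R ω) * (S ω - mh ω)) ∂P + ∫ ω, mh ω ∂P := by
    rw [← integral_add (integrable_inv_one_sub_mul hph_ae hε hph_pos hresid) hmh_int]
    congr 1; ext ω; simp only [drScore]; ring
  calc ∫ ω, drScore R S ph mh ω ∂P - ∫ ω, S ω ∂P
      = ∫ ω, (1 - ph ω)⁻¹ * ((1 - P[R|m] ω) * (μ₀ ω - mh ω)) ∂P - ∫ ω, μ₀ ω - mh ω ∂P := by
        rw [hdrScore, hweighted, hS_eq, integral_sub hμ₀ hmh_int]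
        ring
    _ = ∫ ω, ((1 - ph ω)⁻¹ * ((1 - P[R|m] ω) * (μ₀ ω - mh ω)) - (μ₀ ω - mh ω)) ∂P :=
        (integral_sub hweighted_int (hμ₀.sub hmh_int)).symm
    _ = _ := by
        refine integral_congr_ae ?_
        filter_upwards [hph_pos] with ω hω
        have : 1 - ph ω ≠ 0 := by linarith
        field_simp
        ring

theorem abs_integral_drScore_sub_integral_le [IsFiniteMeasure P] (hm : m ≤ mΩ)
    (hR : AEMeasurable R P) (hR01 : ∀ᵐ ω ∂P, R ω ∈ Set.Icc 0 1) (hS : Integrable S P)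
    (hMAR : MissingAtRandom P m R S) (hpos : ∀ᵐ ω ∂P, P[R|m] ω ≠ 1) (hph : StronglyMeasurable[m] ph)
    (hmh : StronglyMeasurable[m] mh) (hε : 0 < ε) (hph_pos : ∀ᵐ ω ∂P, ε ≤ 1 - ph ω)
    (hπ_L2 : MemLp (fun ω => ph ω - P[R|m] ω) 2 P)
    (hμ_L2 : MemLp (fun ω => mh ω - outcomeRegression P m R S ω) 2 P) :
    |∫ ω, drScore R S ph mh ω ∂P - ∫ ω, S ω ∂P|
      ≤ 1 / ε * ((eLpNorm (fun ω => ph ω - P[R|m] ω) 2 P).toReal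
        * (eLpNorm (fun ω => mh ω - outcomeRegression P m R S ω) 2 P).toReal) := by
  have hmh_int := integrable_of_memLp_sub_outcomeRegression hm (Integrable.of_mem_Icc 0 1 hR hR01)
    hMAR hpos one_le_two hμ_L2
  rw [integral_drScore_sub_integral hm hR hR01 hS hMAR hpos hph hmh hmh_int hε hph_pos, one_div]
  calc _ ≤ ∫ ω, |(ph ω - P[R|m] ω) * (outcomeRegression P m R S ω - mh ω) / (1 - ph ω)| ∂P :=
        abs_integral_le_integral_abs
    _ ≤ ∫ ω, ε⁻¹ * |(ph ω - P[R|m] ω) * (mh ω - outcomeRegression P m R S ω)| ∂P := by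
        refine integral_mono_of_nonneg (ae_of_all _ fun _ => abs_nonneg _)
          ((hπ_L2.integrable_mul hμ_L2).abs.const_mul _) ?_
        filter_upwards [hph_pos] with ω hω
        rw [abs_div, abs_of_pos (hε.trans_le hω), div_eq_inv_mul, abs_mul, abs_mul,
          abs_sub_comm (outcomeRegression P m R S ω)]
        gcongr
    _ = ε⁻¹ * ∫ ω, |(ph ω - P[R|m] ω) * (mh ω - outcomeRegression P m R S ω)| ∂P :=
        integral_const_mul _ _
    _ ≤ _ := by
        gcongr
        exact integral_abs_mul_le_eLpNorm_two_mul hπ_L2 hμ_L2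

end DoublyRobust

/-- **The second-order bias bound `R₂(P̂, P)` in the proof of Theorem 3.2.**
For two abstaining classifiers A and B on common inputs X, each satisfying MAR and
ε-positivity, and nuisance estimates with `1 − π̂•(X) ≥ ε` a.s., the bias of the doubly
robust functional for the difference is bounded by the sum of the single-classifier
doubly robust bias bounds. -/
theorem dr_bias_bound_difference
    {Ω 𝒳 : Type*} [MeasurableSpace Ω] [MeasurableSpace 𝒳]
    (P : Measure Ω) [IsProbabilityMeasure P]
    (X : Ω → 𝒳) (hX : Measurable X)
    (RA SA RB SB : Ω → ℝ)
    (hRA : Measurable RA) (hRB : Measurable RB)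
    (hRA01 : ∀ ω, RA ω = 0 ∨ RA ω = 1) (hRB01 : ∀ ω, RB ω = 0 ∨ RB ω = 1)
    (hSAmeas : Measurable SA) (hSBmeas : Measurable SB)
    (hSAint : Integrable SA P) (hSBint : Integrable SB P)
    -- the σ-algebra generated by X
    (mX : MeasurableSpace Ω) (hmX : mX = MeasurableSpace.comap X inferInstance)
    -- MAR condition for each triple (X, R•, S•)
    (hMARA : P[fun ω => (1 - RA ω) * SA ω|mX]
      =ᵐ[P] fun ω => (P[fun ω' => 1 - RA ω'|mX]) ω * (P[SA|mX]) ω)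
    (hMARB : P[fun ω => (1 - RB ω) * SB ω|mX]
      =ᵐ[P] fun ω => (P[fun ω' => 1 - RB ω'|mX]) ω * (P[SB|mX]) ω)
    -- ε-positivity condition for each classifier
    (ε : ℝ) (hε : 0 < ε)
    (hposA : ∀ᵐ ω ∂P, (P[RA|mX]) ω ≤ 1 - ε)
    (hposB : ∀ᵐ ω ∂P, (P[RB|mX]) ω ≤ 1 - ε)
    -- abbreviations: π•(X), μ0•(X) and Δᴬᴮ
    (πAX μ0AX πBX μ0BX : Ω → ℝ) (Δ : ℝ)
    (hπAX : πAX = P[RA|mX]) (hπBX : πBX = P[RB|mX])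
    (hμ0AX : μ0AX = fun ω => (P[fun ω' => (1 - RA ω') * SA ω'|mX]) ω / (1 - πAX ω))
    (hμ0BX : μ0BX = fun ω => (P[fun ω' => (1 - RB ω') * SB ω'|mX]) ω / (1 - πBX ω))
    (hΔ : Δ = ∫ ω, (SA ω - SB ω) ∂P)
    -- nuisance estimates, with 1 − π̂•(X) ≥ ε a.s.
    (πhatA μhatA πhatB μhatB : 𝒳 → ℝ)
    (hπhatA : Measurable πhatA) (hμhatA : Measurable μhatA)
    (hπhatB : Measurable πhatB) (hμhatB : Measurable μhatB)
    (hposA' : ∀ᵐ ω ∂P, ε ≤ 1 - πhatA (X ω))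
    (hposB' : ∀ᵐ ω ∂P, ε ≤ 1 - πhatB (X ω))
    -- all relevant differences lie in L²(P)
    (hL2πA : MemLp (fun ω => πhatA (X ω) - πAX ω) 2 P)
    (hL2μA : MemLp (fun ω => μhatA (X ω) - μ0AX ω) 2 P)
    (hL2πB : MemLp (fun ω => πhatB (X ω) - πBX ω) 2 P)
    (hL2μB : MemLp (fun ω => μhatB (X ω) - μ0BX ω) 2 P)
    -- integrability of the doubly robust functional
    (hint : Integrable (fun ω =>
      (1 - RA ω) / (1 - πhatA (X ω)) * (SA ω - μhatA (X ω)) + μhatA (X ω)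
        - ((1 - RB ω) / (1 - πhatB (X ω)) * (SB ω - μhatB (X ω)) + μhatB (X ω))) P) :
    |(∫ ω, ((1 - RA ω) / (1 - πhatA (X ω)) * (SA ω - μhatA (X ω)) + μhatA (X ω)
        - ((1 - RB ω) / (1 - πhatB (X ω)) * (SB ω - μhatB (X ω)) + μhatB (X ω))) ∂P) - Δ|
      ≤ (1 / ε) * ((eLpNorm (fun ω => πhatA (X ω) - πAX ω) 2 P).toReal
            * (eLpNorm (fun ω => μhatA (X ω) - μ0AX ω) 2 P).toReal
          + (eLpNorm (fun ω => πhatB (X ω) - πBX ω) 2 P).toReal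
            * (eLpNorm (fun ω => μhatB (X ω) - μ0BX ω) 2 P).toReal) := by
  subst hπAX hπBX hΔ
  obtain rfl : μ0AX = outcomeRegression P mX RA SA := hμ0AX
  obtain rfl : μ0BX = outcomeRegression P mX RB SB := hμ0BX
  have hm := hX.comap_le
  rw [← hmX] at hm
  have hXm : Measurable[mX] X := by rw [hmX]; exact comap_measurable X
  have hR01 {R : Ω → ℝ} (h : ∀ ω, R ω = 0 ∨ R ω = 1) : ∀ᵐ ω ∂P, R ω ∈ Set.Icc 0 1 :=
    ae_of_all _ fun ω => by rcases h ω with h | h <;> simp [h]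
  have hpos {R : Ω → ℝ} (h : ∀ᵐ ω ∂P, P[R|mX] ω ≤ 1 - ε) : ∀ᵐ ω ∂P, P[R|mX] ω ≠ 1 := by
    filter_upwards [h] with ω hω
    linarith
  have hμA := integrable_of_memLp_sub_outcomeRegression hm
    (.of_mem_Icc 0 1 hRA.aemeasurable (hR01 hRA01)) hMARA (hpos hposA) one_le_two hL2μA
  have hμB := integrable_of_memLp_sub_outcomeRegression hm
    (.of_mem_Icc 0 1 hRB.aemeasurable (hR01 hRB01)) hMARB (hpos hposB) one_le_two hL2μB
  have hφA := integrable_drScore (ph := fun ω => πhatA (X ω)) hRA.aemeasurable (hR01 hRA01)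
    hSAint (hπhatA.comp hX).aemeasurable hμA hε hposA'
  have hφB := integrable_drScore (ph := fun ω => πhatB (X ω)) hRB.aemeasurable (hR01 hRB01)
    hSBint (hπhatB.comp hX).aemeasurable hμB hε hposB'
  have hboundA := abs_integral_drScore_sub_integral_le (ph := fun ω => πhatA (X ω))
    (mh := fun ω => μhatA (X ω)) hm hRA.aemeasurable (hR01 hRA01) hSAint hMARA (hpos hposA)
    (hπhatA.comp hXm).stronglyMeasurable (hμhatA.comp hXm).stronglyMeasurable hε hposA' hL2πA hL2μA
  have hboundB := abs_integral_drScore_sub_integral_le (ph := fun ω => πhatB (X ω))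
    (mh := fun ω => μhatB (X ω)) hm hRB.aemeasurable (hR01 hRB01) hSBint hMARB (hpos hposB)
    (hπhatB.comp hXm).stronglyMeasurable (hμhatB.comp hXm).stronglyMeasurable hε hposB' hL2πB hL2μB
  change |∫ ω, drScore RA SA (fun ω => πhatA (X ω)) (fun ω => μhatA (X ω)) ω
      - drScore RB SB (fun ω => πhatB (X ω)) (fun ω => μhatB (X ω)) ω ∂P - _| ≤ _
  rw [integral_sub hφA hφB, integral_sub hSAint hSBint, mul_add]
  rw [abs_le] at hboundA hboundB ⊢
  constructor <;> linarith [hboundA.1, hboundA.2, hboundB.1, hboundB.2]
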